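/- arXiv:1004.1883 — 2 statements merged into one kernel-verified Lean document; each statement's English description precedes it below -/
import Mathlib

section
/- Let (φ_k)_{k≥0} be a sequence of real numbers with φ_0 > 0, let ρ : {1,2,3,…} → ℝ be a weight function, and let F(z) = ∑_{n≥1} ( ∑_{T plane tree, |T|=n} w_deg(T)·w_h(T) ) z^n be the formal power series over ℝ whose n-th coefficient is the total degree-and-hook weight of all plane trees of size n. Then for every n ≥ 1, the coefficient of z^n in F equals ρ(n) times the coefficient of z^{n-1} in φ(F(z)), where φ(t) = ∑_{k≥0} φ_k t^k; i.e. [z^n]F(z) = ρ(n)·[z^{n-1}]φ(F(z)). -/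
/-- A plane tree (ordered rooted tree): a root together with a finite
sequence of plane trees (its root subtrees). -/
inductive PlaneTree : Type where
  | node : List PlaneTree → PlaneTree

namespace PlaneTree

/-- The size of a plane tree: its number of vertices. -/
def size : PlaneTree → ℕ
  | node ts => 1 + (ts.attach.map fun t => size t.1).sum
decreasing_by simp only [PlaneTree.node.sizeOf_spec]; have := List.sizeOf_lt_of_mem t.2; omega

/-- The degree weight `w_deg(T) = ∏_{v ∈ T} φ_{d(v)}`, where `d(v)` is the
out-degree of the vertex `v`. -/
noncomputable def degWeight (φ : ℕ → ℝ) : PlaneTree → ℝ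
  | node ts => φ ts.length * (ts.attach.map fun t => degWeight φ t.1).prod
decreasing_by simp only [PlaneTree.node.sizeOf_spec]; have := List.sizeOf_lt_of_mem t.2; omega

/-- The hook weight `w_h(T) = ∏_{v ∈ T} ρ(h_v)`, where the hook length `h_v`
is the number of vertices of the subtree of `T` rooted at `v`. -/
noncomputable def hookWeight (ρ : ℕ → ℝ) : PlaneTree → ℝ
  | node ts => ρ (size (node ts)) * (ts.attach.map fun t => hookWeight ρ t.1).prod
decreasing_by simp only [PlaneTree.node.sizeOf_spec]; have := List.sizeOf_lt_of_mem t.2; omega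

end PlaneTree

/-- Composition `∑_{k ≥ 0} c_k F^k` of a coefficient sequence `c` with a formal
power series `F` having zero constant term: since `F^k` has order `≥ k`, the
`n`-th coefficient only involves `k ≤ n`. -/
noncomputable def seriesComp (c : ℕ → ℝ) (F : PowerSeries ℝ) : PowerSeries ℝ :=
  PowerSeries.mk fun n => ∑ k ∈ Finset.range (n + 1), c k * (PowerSeries.coeff (R := ℝ) n) (F ^ k)

/-! Deleting the root of a tree of size `m + 1` leaves the list of its root subtrees, a forest of
total size `m`, and this is a bijection. The root contributes the factor `ρ (m + 1) * φ k`, where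
`k` is the number of subtrees, and the forests of `k` trees with total size `m` have total weight
`[z^m] F^k`, since the `k`-th power of a generating function counts `k`-tuples by total size.
Summing over `k` gives `[z^(m+1)] F = ρ (m + 1) * [z^m] φ(F)`; a forest of size `m` has at most
`m` trees, which matches the truncation `k ≤ m` in `seriesComp`. -/

open Finset PowerSeries

theorem PowerSeries.coeff_pow_eq_sum_piAntidiag {R : Type*} [CommSemiring R] (F : R⟦X⟧)
    (k n : ℕ) :
    coeff n (F ^ k) = ∑ s ∈ (univ : Finset (Fin k)).piAntidiag n, ∏ i, coeff (s i) F := by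
  rw [← Fin.prod_const, coeff_prod, finsuppAntidiag, sum_map]
  exact sum_attach _ (fun s : Fin k → ℕ => ∏ i, coeff (s i) F)

theorem Set.Finite.setOf_length_le_forall_mem {α : Type*} {S : Set α} (hS : S.Finite) (n : ℕ) :
    {l : List α | l.length ≤ n ∧ ∀ a ∈ l, a ∈ S}.Finite := by
  have := hS.to_subtype
  refine ((List.finite_length_le S n).image (List.map Subtype.val)).subset ?_
  rintro l ⟨hlen, hl⟩
  lift l to List S using hl
  exact ⟨l, by simpa using hlen, rfl⟩

section TuplesOfSize

open scoped Classical

variable {α : Type*}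

noncomputable def tuplesOfSize (level : ℕ → Finset α) (k n : ℕ) : Finset (Fin k → α) :=
  (univ.piAntidiag n).biUnion fun s => Fintype.piFinset fun i => level (s i)

variable {level : ℕ → Finset α} {size : α → ℕ}

theorem mem_tuplesOfSize (hlevel : ∀ n a, a ∈ level n ↔ size a = n) {k n : ℕ}
    {f : Fin k → α} : f ∈ tuplesOfSize level k n ↔ ∑ i, size (f i) = n := by
  simp only [tuplesOfSize, mem_biUnion, Fintype.mem_piFinset, mem_piAntidiag, hlevel, mem_univ,
    implies_true, and_true]
  refine ⟨?_, fun h => ⟨_, h, fun _ => rfl⟩⟩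
  rintro ⟨s, rfl, hs⟩
  exact sum_congr rfl fun i _ => hs i

theorem coeff_pow_eq_sum_tuplesOfSize (hlevel : ∀ n a, a ∈ level n ↔ size a = n)
    {R : Type*} [CommSemiring R] (w : α → R) (F : R⟦X⟧)
    (hF : ∀ n, coeff n F = ∑ a ∈ level n, w a) (k n : ℕ) :
    coeff n (F ^ k) = ∑ f ∈ tuplesOfSize level k n, ∏ i, w (f i) := by
  have hdisj : ((univ.piAntidiag n : Finset (Fin k → ℕ)) : Set (Fin k → ℕ)).PairwiseDisjoint
      fun s => Fintype.piFinset fun i => level (s i) := by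
    intro s _ t _ hst
    refine disjoint_left.mpr fun f hfs hft => hst (funext fun i => ?_)
    simp only [Fintype.mem_piFinset, hlevel] at hfs hft
    rw [← hfs i, hft i]
  rw [coeff_pow_eq_sum_piAntidiag, tuplesOfSize, sum_biUnion hdisj]
  simp_rw [hF, prod_univ_sum]

end TuplesOfSize

namespace PlaneTree

def children : PlaneTree → List PlaneTree
  | node ts => ts

@[simps]
def nodeEquiv : List PlaneTree ≃ PlaneTree where
  toFun := node
  invFun := children
  left_inv _ := rfl
  right_inv | node _ => rfl

theorem size_node (ts : List PlaneTree) : size (node ts) = 1 + (ts.map size).sum := by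
  rw [size, List.attach_map_val]

theorem degWeight_node (φ : ℕ → ℝ) (ts : List PlaneTree) :
    degWeight φ (node ts) = φ ts.length * (ts.map (degWeight φ)).prod := by
  rw [degWeight, List.attach_map_val]

theorem hookWeight_node (ρ : ℕ → ℝ) (ts : List PlaneTree) :
    hookWeight ρ (node ts) = ρ (size (node ts)) * (ts.map (hookWeight ρ)).prod := by
  rw [hookWeight, List.attach_map_val]

theorem one_le_size : ∀ T : PlaneTree, 1 ≤ T.size
  | node ts => by rw [size_node]; omega

theorem length_le_sum_size (ts : List PlaneTree) : ts.length ≤ (ts.map size).sum := by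
  simpa using List.length_le_sum_of_one_le (ts.map size) (by simpa using fun T _ => one_le_size T)

theorem finite_setOf_size_le (n : ℕ) : {T : PlaneTree | T.size ≤ n}.Finite := by
  induction n with
  | zero => exact Set.finite_empty.subset fun T (hT : T.size ≤ 0) => by linarith [one_le_size T]
  | succ n ih =>
    refine ((ih.setOf_length_le_forall_mem n).image node).subset ?_
    rintro ⟨ts⟩ hT
    rw [Set.mem_ofPred_eq, size_node] at hT
    refine ⟨ts, ⟨by linarith [length_le_sum_size ts], fun t ht => ?_⟩, rfl⟩
    show t.size ≤ n
    linarith [List.le_sum_of_mem (List.mem_map_of_mem (f := size) ht)]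

theorem finite_setOf_size_eq (n : ℕ) : {T : PlaneTree | T.size = n}.Finite :=
  (finite_setOf_size_le n).subset fun _ h => le_of_eq h

noncomputable def ofSize (n : ℕ) : Finset PlaneTree :=
  (finite_setOf_size_eq n).toFinset

theorem mem_ofSize {n : ℕ} {T : PlaneTree} : T ∈ ofSize n ↔ T.size = n :=
  (finite_setOf_size_eq n).mem_toFinset

theorem tsum_subtype_size_eq {M : Type*} [AddCommMonoid M] [TopologicalSpace M]
    (f : PlaneTree → M) (n : ℕ) :
    ∑' T : {T : PlaneTree // T.size = n}, f T = ∑ T ∈ ofSize n, f T := by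
  rw [← Finset.tsum_subtype]
  exact ((Equiv.subtypeEquivRight fun _ => mem_ofSize).tsum_eq (f ∘ Subtype.val)).symm

noncomputable def weight (φ ρ : ℕ → ℝ) (T : PlaneTree) : ℝ :=
  T.degWeight φ * T.hookWeight ρ

theorem weight_node (φ ρ : ℕ → ℝ) (ts : List PlaneTree) :
    weight φ ρ (node ts) =
      ρ (size (node ts)) * (φ ts.length * (ts.map (weight φ ρ)).prod) := by
  rw [weight, degWeight_node, hookWeight_node,
    show ts.map (weight φ ρ) = ts.map fun t => degWeight φ t * hookWeight ρ t from rfl,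
    List.prod_map_mul]
  ring

theorem sum_weight_ofSize_succ (φ ρ : ℕ → ℝ) (m : ℕ) :
    ∑ T ∈ ofSize (m + 1), weight φ ρ T =
      ρ (m + 1) *
        ∑ k ∈ range (m + 1), φ k * ∑ f ∈ tuplesOfSize ofSize k m, ∏ i, weight φ ρ (f i) := by
  simp_rw [mul_sum]
  rw [sum_sigma']
  refine sum_equiv (nodeEquiv.symm.trans List.equivSigmaTuple)
    (fun ⟨ts⟩ => ?_) (fun ⟨ts⟩ hT => ?_)
  · have := length_le_sum_size ts
    simp only [mem_ofSize, size_node, List.equivSigmaTuple, Equiv.trans_apply, nodeEquiv_symm_apply,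
      children, Equiv.coe_fn_mk, mem_sigma, mem_range, Order.lt_add_one_iff,
      mem_tuplesOfSize (fun _ _ => mem_ofSize), List.get_eq_getElem, Fin.sum_univ_fun_getElem]
    omega
  · rw [weight_node, mem_ofSize.mp hT]
    exact congrArg (fun x => ρ (m + 1) * (φ ts.length * x)) (Fin.prod_univ_fun_getElem ts _).symm

end PlaneTree

theorem hook_length_simply_generated_general
    (φ : ℕ → ℝ) (ρ : ℕ → ℝ)
    (F : PowerSeries ℝ)
    (hF : F = PowerSeries.mk fun n =>
      ∑' T : {T : PlaneTree // T.size = n}, T.1.degWeight φ * T.1.hookWeight ρ)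
    (n : ℕ) (hn : 1 ≤ n) :
    (PowerSeries.coeff (R := ℝ) n) F = ρ n * (PowerSeries.coeff (R := ℝ) (n - 1)) (seriesComp φ F) := by
  have hcoeff (j : ℕ) : coeff j F = ∑ T ∈ PlaneTree.ofSize j, PlaneTree.weight φ ρ T := by
    rw [hF, coeff_mk]
    exact PlaneTree.tsum_subtype_size_eq (PlaneTree.weight φ ρ) j
  obtain ⟨m, rfl⟩ : ∃ m, n = m + 1 := ⟨n - 1, by omega⟩
  rw [hcoeff, PlaneTree.sum_weight_ofSize_succ, seriesComp, coeff_mk, Nat.add_sub_cancel]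
  simp_rw [coeff_pow_eq_sum_tuplesOfSize (fun _ _ => PlaneTree.mem_ofSize) _ F hcoeff]

/-- **Hook length formula for simply generated (weighted plane) trees.**
If `F(z) = ∑_{n≥1} (∑_{|T|=n} w_deg(T) w_h(T)) zⁿ`, then for all `n ≥ 1`,
`[zⁿ]F(z) = ρ(n) · [z^{n-1}] φ(F(z))`. -/
theorem hook_length_simply_generated
    (φ : ℕ → ℝ) (hφ : 0 < φ 0) (ρ : ℕ → ℝ)
    (F : PowerSeries ℝ)
    (hF : F = PowerSeries.mk fun n =>
      ∑' T : {T : PlaneTree // T.size = n}, T.1.degWeight φ * T.1.hookWeight ρ)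
    (n : ℕ) (hn : 1 ≤ n) :
    (PowerSeries.coeff (R := ℝ) n) F = ρ n * (PowerSeries.coeff (R := ℝ) (n - 1)) (seriesComp φ F) :=
  hook_length_simply_generated_general φ ρ F hF n hn
end

section
/- Let ρ : {1,2,3,…} → ℝ and let F(z) = ∑_{n≥1} ( ∑_{T binary tree with n vertices} ∏_{v∈T} ρ(h_v) ) z^n be the formal power series over ℝ whose n-th coefficient is the total hook weight of all binary trees with n vertices. Then for every n ≥ 1, [z^n]F(z) = ρ(n)·[z^{n-1}](1 + F(z))^2. -/
/-- A binary tree: either empty, or a root vertex with a left and right binary subtree. -/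
inductive BinTree : Type where
  | empty : BinTree
  | node : BinTree → BinTree → BinTree

namespace BinTree

/-- The size of a binary tree: its number of vertices. -/
def size : BinTree → ℕ
  | empty => 0
  | node l r => 1 + l.size + r.size

/-- The hook weight `w_h(T) = ∏_{v ∈ T} ρ(h_v)`, where the hook length `h_v`
is the number of vertices of the subtree rooted at `v` (empty product for the
empty tree). -/
noncomputable def hookWeight (ρ : ℕ → ℝ) : BinTree → ℝ
  | empty => 1
  | node l r => ρ (size (node l r)) * hookWeight ρ l * hookWeight ρ r

end BinTree

/-
The weight of `node l r` is `ρ (|l| + |r| + 1)` times the weights of `l` and `r`, and a tree with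
`m + 1` vertices is exactly a root over a pair of subtrees whose sizes sum to `m`. Hence the total
weight `t n` of the trees with `n` vertices satisfies `t 0 = 1` and
`t (m + 1) = ρ (m + 1) ∑_{i + j = m} t i t j`, and the last sum is `[z^m] (1 + F)²` since
`1 + F = ∑ t n zⁿ`.
-/

open Finset

namespace BinTree

theorem eq_empty_of_size_eq_zero {T : BinTree} (h : T.size = 0) : T = empty := by
  cases T with
  | empty => rfl
  | node l r => simp [size] at h

instance : Unique {T : BinTree // T.size = 0} where
  default := ⟨empty, rfl⟩
  uniq T := Subtype.ext (eq_empty_of_size_eq_zero T.2)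

def nodeEquiv (m : ℕ) :
    (Σ p : antidiagonal m,
      {T : BinTree // T.size = p.1.1} × {T : BinTree // T.size = p.1.2}) ≃
    {T : BinTree // T.size = m + 1} where
  toFun x := ⟨node x.2.1 x.2.2, by
    have hp := mem_antidiagonal.mp x.1.2
    simp only [size, x.2.1.2, x.2.2.2]
    omega⟩
  invFun
    | ⟨empty, h⟩ => absurd h (by simp [size])
    | ⟨node l r, h⟩ =>
      ⟨⟨(l.size, r.size), mem_antidiagonal.mpr (by simp only [size] at h; omega)⟩,
        ⟨l, rfl⟩, ⟨r, rfl⟩⟩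
  left_inv := by
    rintro ⟨⟨⟨i, j⟩, hij⟩, ⟨l, hl⟩, ⟨r, hr⟩⟩
    dsimp only at hl hr
    subst hl hr
    rfl
  right_inv := by
    rintro ⟨_ | ⟨l, r⟩, h⟩
    · simp [size] at h
    · rfl

theorem finite_size_eq (n : ℕ) : Finite {T : BinTree // T.size = n} := by
  induction n using Nat.strong_induction_on with
  | _ n ih =>
    match n with
    | 0 => infer_instance
    | m + 1 =>
      have (p : antidiagonal m) : Finite {T : BinTree // T.size = p.1.1} :=
        ih _ (by have := mem_antidiagonal.mp p.2; omega)
      have (p : antidiagonal m) : Finite {T : BinTree // T.size = p.1.2} :=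
        ih _ (by have := mem_antidiagonal.mp p.2; omega)
      exact Finite.of_equiv _ (nodeEquiv m)

noncomputable instance (n : ℕ) : Fintype {T : BinTree // T.size = n} :=
  have := finite_size_eq n
  Fintype.ofFinite _

noncomputable def totalHookWeight (ρ : ℕ → ℝ) (n : ℕ) : ℝ :=
  ∑' T : {T : BinTree // T.size = n}, T.1.hookWeight ρ

theorem totalHookWeight_eq_sum (ρ : ℕ → ℝ) (n : ℕ) :
    totalHookWeight ρ n = ∑ T : {T : BinTree // T.size = n}, T.1.hookWeight ρ :=
  tsum_fintype _

theorem totalHookWeight_zero (ρ : ℕ → ℝ) : totalHookWeight ρ 0 = 1 := by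
  simp [totalHookWeight_eq_sum, default, hookWeight]

theorem totalHookWeight_succ (ρ : ℕ → ℝ) (m : ℕ) :
    totalHookWeight ρ (m + 1) =
      ρ (m + 1) * ∑ p ∈ antidiagonal m, totalHookWeight ρ p.1 * totalHookWeight ρ p.2 := by
  have hweight (x) : ((nodeEquiv m) x).1.hookWeight ρ =
      ρ (m + 1) * (x.2.1.1.hookWeight ρ * x.2.2.1.hookWeight ρ) := by
    have hsize := ((nodeEquiv m) x).2
    simp only [nodeEquiv, Equiv.coe_fn_mk] at hsize ⊢
    rw [hookWeight, hsize, mul_assoc]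
  simp only [totalHookWeight_eq_sum, ← (nodeEquiv m).sum_comp, hweight, ← Finset.mul_sum,
    Fintype.sum_sigma, Fintype.sum_prod_type, Finset.sum_mul_sum]
  rw [← Finset.sum_coe_sort (antidiagonal m)]

end BinTree

/-- **Han's hook length formula for binary trees.**
If `F(z) = ∑_{n≥1} (∑_{T binary, |T|=n} ∏_{v∈T} ρ(h_v)) zⁿ`, then for all `n ≥ 1`,
`[zⁿ]F(z) = ρ(n) · [z^{n-1}] (1 + F(z))²`. -/
theorem hook_length_binary_trees
    (ρ : ℕ → ℝ) (F : PowerSeries ℝ)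
    (hF : F = PowerSeries.mk fun n =>
      if n = 0 then 0 else ∑' T : {T : BinTree // T.size = n}, T.1.hookWeight ρ)
    (n : ℕ) (hn : 1 ≤ n) :
    (PowerSeries.coeff (R := ℝ) n) F = ρ n * (PowerSeries.coeff (R := ℝ) (n - 1)) ((1 + F) ^ 2) := by
  have hF' : F = PowerSeries.mk fun n => if n = 0 then 0 else BinTree.totalHookWeight ρ n := hF
  have hcoeff (k : ℕ) : PowerSeries.coeff k (1 + F) = BinTree.totalHookWeight ρ k := by
    cases k <;> simp [hF', PowerSeries.coeff_one, BinTree.totalHookWeight_zero]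
  obtain ⟨m, rfl⟩ := Nat.exists_eq_add_of_le' hn
  rw [Nat.add_sub_cancel]
  calc PowerSeries.coeff (m + 1) F
      = PowerSeries.coeff (m + 1) (1 + F) := by simp [PowerSeries.coeff_one]
    _ = ρ (m + 1) * PowerSeries.coeff m ((1 + F) ^ 2) := by
      simp only [hcoeff, BinTree.totalHookWeight_succ, sq, PowerSeries.coeff_mul]
end
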